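/- arXiv:1807.06074 — 4 statements merged into one kernel-verified Lean document; each statement's English description precedes it below -/
import Mathlib

section
/- If ε₂ = 0 and c ≠ 0 and b ≠ 0, the cubic P(v) = cv³ + av² + b²/4 has three distinct real roots if and only if a < −3·(|bc|/4)^{2/3}. -/
/-!
With `e = b²/4 > 0`, the cubic `f v = c v³ + a v² + e` has critical points `0` and
`m = -2a/(3c)`, where `f 0 = e > 0` and `f m = (4a³ + 27c²e)/(27c²)`. If `f m < 0`, then, since
`c • f` tends to `∓∞` at `∓∞`, the intermediate value theorem gives three real roots. Conversely,
three distinct real roots make the discriminant `-e(4a³ + 27c²e)` of `f` positive, as it is the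
square of `c² ∏ (rᵢ - rⱼ)`. Finally `4a³ + 27c²b²/4 < 0` says `a³ < (-3 (|bc|/4)^(2/3))³`.
-/

open Filter Polynomial

namespace Cubic

variable {R : Type*} [CommRing R] [IsDomain R] [DecidableEq R]

theorem coe_roots_toFinset {P : Cubic R} (h0 : P.toPoly ≠ 0) :
    (P.roots.toFinset : Set R) = {x | P.a * x ^ 3 + P.b * x ^ 2 + P.c * x + P.d = 0} := by
  ext x
  simp [mem_roots_iff h0]

theorem discr_pos_of_card_roots_toFinset_eq_three {K : Type*} [Field K] [LinearOrder K]
    [IsStrictOrderedRing K] {P : Cubic K} (ha : P.a ≠ 0)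
    (h3 : P.roots.toFinset.card = 3) : 0 < P.discr := by
  have hcard : P.roots.card = 3 := by
    have := Multiset.toFinset_card_le P.roots
    have : P.roots.card ≤ 3 := (card_roots' _).trans (natDegree_of_a_ne_zero ha).le
    omega
  have hnodup : P.roots.Nodup := by
    rw [← Multiset.toFinset_card_eq_card_iff_nodup, h3, hcard]
  have hsplit : (P.toPoly.map (RingHom.id K)).Splits :=
    (splits_iff_card_roots (φ := RingHom.id K) ha).mpr hcard
  obtain ⟨x, y, z, hxyz⟩ := Multiset.card_eq_three.mp hcard
  have hsq : P.discr = _ := discr_eq_prod_three_roots (φ := RingHom.id K) ha hxyz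
  have hne := (discr_ne_zero_iff_roots_nodup (φ := RingHom.id K) ha hsplit).mpr hnodup
  exact lt_of_le_of_ne (hsq ▸ sq_nonneg _) hne.symm

end Cubic

theorem exists_three_zeros_of_sign_changes {f : ℝ → ℝ} (hf : Continuous f) {x₀ x₁ x₂ x₃ : ℝ}
    (h₀₁ : x₀ < x₁) (h₁₂ : x₁ < x₂) (h₂₃ : x₂ < x₃)
    (h₀ : f x₀ < 0) (h₁ : 0 < f x₁) (h₂ : f x₂ < 0) (h₃ : 0 < f x₃) :
    ∃ r₁ r₂ r₃, r₁ < r₂ ∧ r₂ < r₃ ∧ f r₁ = 0 ∧ f r₂ = 0 ∧ f r₃ = 0 := by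
  obtain ⟨r₁, ⟨-, hr₁⟩, hfr₁⟩ := intermediate_value_Ioo h₀₁.le hf.continuousOn ⟨h₀, h₁⟩
  obtain ⟨r₂, ⟨hr₂, hr₂'⟩, hfr₂⟩ := intermediate_value_Ioo' h₁₂.le hf.continuousOn ⟨h₂, h₁⟩
  obtain ⟨r₃, ⟨hr₃, -⟩, hfr₃⟩ := intermediate_value_Ioo h₂₃.le hf.continuousOn ⟨h₂, h₃⟩
  exact ⟨r₁, r₂, r₃, hr₁.trans hr₂, hr₂'.trans hr₃, hfr₁, hfr₂, hfr₃⟩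

section CubicWithoutLinearTerm

variable {a c e : ℝ}

theorem tendsto_mul_cubic_atTop (hc : c ≠ 0) :
    Tendsto (fun x => c * (c * x ^ 3 + a * x ^ 2 + e)) atTop atTop := by
  have hlin : Tendsto (fun x => c ^ 2 * x + a * c) atTop atTop :=
    tendsto_atTop_add_const_right _ _ (tendsto_id.const_mul_atTop (by positivity))
  have := tendsto_atTop_add_const_right _ (c * e)
    ((tendsto_pow_atTop two_ne_zero).atTop_mul_atTop₀ hlin)
  exact this.congr fun x => by ring

theorem tendsto_mul_cubic_atBot (hc : c ≠ 0) :
    Tendsto (fun x => c * (c * x ^ 3 + a * x ^ 2 + e)) atBot atBot := by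
  have := tendsto_neg_atTop_atBot.comp
    ((tendsto_mul_cubic_atTop (a := a) (e := e) (neg_ne_zero.mpr hc)).comp tendsto_neg_atBot_atTop)
  exact this.congr fun x => by simp only [Function.comp]; ring

theorem cubic_eval_critical_point (hc : c ≠ 0) :
    c * (-2 * a / (3 * c)) ^ 3 + a * (-2 * a / (3 * c)) ^ 2 + e =
      (4 * a ^ 3 + 27 * c ^ 2 * e) / (27 * c ^ 2) := by
  field_simp
  ring

theorem exists_three_roots_cubic (hc : c ≠ 0) (he : 0 < e) (h : 4 * a ^ 3 + 27 * c ^ 2 * e < 0) :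
    ∃ r₁ r₂ r₃, r₁ < r₂ ∧ r₂ < r₃ ∧ c * r₁ ^ 3 + a * r₁ ^ 2 + e = 0 ∧
      c * r₂ ^ 3 + a * r₂ ^ 2 + e = 0 ∧ c * r₃ ^ 3 + a * r₃ ^ 2 + e = 0 := by
  set f := fun x : ℝ => c * x ^ 3 + a * x ^ 2 + e
  set m := -2 * a / (3 * c)
  have ha : a < 0 := by nlinarith [sq_nonneg a, sq_nonneg c]
  have hfm : f m < 0 := by
    simp only [f, m, cubic_eval_critical_point hc]
    exact div_neg_of_neg_of_pos h (by positivity)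
  have hf0 : f 0 = e := by simp [f]
  obtain ⟨p, q, hpq, hp, hq⟩ : ∃ p q, p < q ∧ 0 < c * f p ∧ c * f q < 0 := by
    rcases hc.lt_or_gt with hc | hc
    · exact ⟨m, 0, div_neg_of_pos_of_neg (by linarith) (by linarith),
        mul_pos_of_neg_of_neg hc hfm, by rw [hf0]; nlinarith⟩
    · exact ⟨0, m, div_pos (by linarith) (by linarith), by rw [hf0]; positivity,
        mul_neg_of_pos_of_neg hc hfm⟩
  obtain ⟨x₀, hx₀, hx₀p⟩ :=
    ((tendsto_mul_cubic_atBot hc).eventually_lt_atBot 0 |>.and (eventually_lt_atBot p)).exists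
  obtain ⟨x₃, hx₃, hx₃q⟩ :=
    ((tendsto_mul_cubic_atTop hc).eventually_gt_atTop 0 |>.and (eventually_gt_atTop q)).exists
  obtain ⟨r₁, r₂, r₃, h₁₂, h₂₃, hr₁, hr₂, hr₃⟩ := exists_three_zeros_of_sign_changes
    (f := fun x => c * f x) (by fun_prop) hx₀p hpq hx₃q hx₀ hp hq hx₃
  simp only [mul_eq_zero, hc, false_or] at hr₁ hr₂ hr₃
  exact ⟨r₁, r₂, r₃, h₁₂, h₂₃, hr₁, hr₂, hr₃⟩

end CubicWithoutLinearTerm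

theorem ncard_setOf_cubic_eq_three_iff {a c e : ℝ} (hc : c ≠ 0) (he : 0 < e) :
    {v : ℝ | c * v ^ 3 + a * v ^ 2 + e = 0}.ncard = 3 ↔ 4 * a ^ 3 + 27 * c ^ 2 * e < 0 := by
  set P : Cubic ℝ := ⟨c, a, 0, e⟩
  have hroots : {v : ℝ | c * v ^ 3 + a * v ^ 2 + e = 0} = P.roots.toFinset := by
    rw [Cubic.coe_roots_toFinset (Cubic.ne_zero_of_a_ne_zero hc)]
    simp [P]
  rw [hroots, Set.ncard_coe_finset]
  constructor
  · intro h3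
    have := Cubic.discr_pos_of_card_roots_toFinset_eq_three hc h3
    simp only [Cubic.discr, P] at this
    nlinarith
  · intro h
    obtain ⟨r₁, r₂, r₃, h₁₂, h₂₃, hr₁, hr₂, hr₃⟩ := exists_three_roots_cubic hc he h
    have hsub : ({r₁, r₂, r₃} : Finset ℝ) ⊆ P.roots.toFinset := by
      intro x hx
      rw [← Finset.mem_coe, ← hroots]
      simp only [Finset.mem_insert, Finset.mem_singleton] at hx
      rcases hx with rfl | rfl | rfl <;> assumption
    have := Finset.card_le_card hsub
    rw [Finset.card_eq_three.mpr ⟨r₁, r₂, r₃, h₁₂.ne, (h₁₂.trans h₂₃).ne, h₂₃.ne, rfl⟩] at this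
    exact le_antisymm Cubic.card_roots_le this

theorem lt_neg_three_mul_rpow_iff {a k : ℝ} (hk : 0 ≤ k) :
    a < -3 * k ^ ((2 : ℝ) / 3) ↔ a ^ 3 < -27 * k ^ 2 := by
  have hcube : (k ^ ((2 : ℝ) / 3)) ^ 3 = k ^ 2 := by
    rw [← Real.rpow_natCast, ← Real.rpow_mul hk]
    norm_num
  rw [← (Odd.strictMono_pow (R := ℝ) (by decide : Odd 3)).lt_iff_lt, mul_pow, hcube]
  norm_num

/-- For ε₂ = 0, c ≠ 0, b ≠ 0: the cubic P(v) = cv³ + av² + b²/4 has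
three distinct real roots iff a < −3·(|bc|/4)^(2/3). -/
theorem stmt_10 (a b c : ℝ) (hb : b ≠ 0) (hc : c ≠ 0) :
    Set.ncard {v : ℝ | c * v ^ 3 + a * v ^ 2 + b ^ 2 / 4 = 0} = 3 ↔
      a < -3 * (|b * c| / 4) ^ ((2 : ℝ) / 3) := by
  rw [ncard_setOf_cubic_eq_three_iff hc (by positivity), lt_neg_three_mul_rpow_iff (by positivity),
    div_pow, sq_abs]
  constructor <;> intro h <;> linarith
end

section
/- All bounded orbits of the second-difference recurrence Cᵀξ_{t+1} + Cξ_{t−1} = A + Dξ_t + Q(ξ_t) with Q(ξ) = (3ε₂ξ₁² + ξ₂², 2ξ₁ξ₂), ε₂ = ±1, are contained in the disk ‖ξ‖ ≤ κ, where κ = (κ₂ + 2κ₃ + √((κ₂+2κ₃)² + 4τ‖A‖))/(2τ), κ₂ = ‖D‖_F, κ₃ = ‖C‖_F, and τ = 1 for ε₂ = 1, τ = √(2/3) for ε₂ = −1. -/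
open Matrix

noncomputable def nrm2 (v : Fin 2 → ℝ) : ℝ := Real.sqrt (v 0 ^ 2 + v 1 ^ 2)

lemma nrm2_nonneg (v : Fin 2 → ℝ) : 0 ≤ nrm2 v := Real.sqrt_nonneg _

lemma nrm2_sq (v : Fin 2 → ℝ) : nrm2 v ^ 2 = v 0 ^ 2 + v 1 ^ 2 :=
  Real.sq_sqrt (by positivity)

lemma nrm2_add (a b : Fin 2 → ℝ) : nrm2 (a + b) ≤ nrm2 a + nrm2 b := by
  have hA := nrm2_sq a
  have hB := nrm2_sq b
  have hA0 := nrm2_nonneg a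
  have hB0 := nrm2_nonneg b
  have hcs : a 0 * b 0 + a 1 * b 1 ≤ nrm2 a * nrm2 b := by
    nlinarith [sq_nonneg (a 0 * b 1 - a 1 * b 0), sq_nonneg (a 0 * b 0 + a 1 * b 1 - nrm2 a * nrm2 b), mul_nonneg hA0 hB0, sq_nonneg (nrm2 a * nrm2 b)]
  rw [nrm2, Pi.add_apply, Pi.add_apply]
  rw [show (a 0 + b 0) ^ 2 + (a 1 + b 1) ^ 2
      = (a 0 ^2 + a 1 ^2) + (b 0 ^2 + b 1 ^2) + 2 * (a 0 * b 0 + a 1 * b 1) by ring]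
  rw [Real.sqrt_le_iff]
  refine ⟨by positivity, by nlinarith⟩

lemma nrm2_neg (a : Fin 2 → ℝ) : nrm2 (-a) = nrm2 a := by
  simp [nrm2]

lemma nrm2_mulVec (M : Matrix (Fin 2) (Fin 2) ℝ) (v : Fin 2 → ℝ) :
    nrm2 (M.mulVec v) ≤ Real.sqrt (∑ i : Fin 2, ∑ j : Fin 2, M i j ^ 2) * nrm2 v := by
  have h0 : M.mulVec v 0 = M 0 0 * v 0 + M 0 1 * v 1 := by
    simp [Matrix.mulVec, dotProduct, Fin.sum_univ_two]
  have h1 : M.mulVec v 1 = M 1 0 * v 0 + M 1 1 * v 1 := by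
    simp [Matrix.mulVec, dotProduct, Fin.sum_univ_two]
  have hs : (∑ i : Fin 2, ∑ j : Fin 2, M i j ^ 2)
      = M 0 0 ^ 2 + M 0 1 ^ 2 + (M 1 0 ^ 2 + M 1 1 ^ 2) := by
    simp only [Fin.sum_univ_two]
  rw [nrm2, nrm2, h0, h1, hs, ← Real.sqrt_mul (by positivity)]
  apply Real.sqrt_le_sqrt
  nlinarith [sq_nonneg (M 0 0 * v 1 - M 0 1 * v 0), sq_nonneg (M 1 0 * v 1 - M 1 1 * v 0)]

/-- All bounded orbits of Cᵀξ_{t+1} + Cξ_{t−1} = A + Dξ_t + Q(ξ_t),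
Q(ξ) = (3ε₂ξ₁² + ξ₂², 2ξ₁ξ₂), ε₂ = ±1, lie in the disk ‖ξ‖ ≤ κ with
κ = (κ₂ + 2κ₃ + √((κ₂+2κ₃)² + 4τ‖A‖))/(2τ), κ₂ = ‖D‖_F, κ₃ = ‖C‖_F,
τ = 1 for ε₂ = 1 and τ = √(2/3) for ε₂ = −1. -/
theorem stmt_17 (C D : Matrix (Fin 2) (Fin 2) ℝ) (A : Fin 2 → ℝ) (ε₂ : ℝ)
    (hε : ε₂ = 1 ∨ ε₂ = -1) (τ : ℝ)
    (hτ₁ : ε₂ = 1 → τ = 1) (hτ₂ : ε₂ = -1 → τ = Real.sqrt (2 / 3))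
    (κ₂ κ₃ κ : ℝ)
    (hκ₂ : κ₂ = Real.sqrt (∑ i : Fin 2, ∑ j : Fin 2, D i j ^ 2))
    (hκ₃ : κ₃ = Real.sqrt (∑ i : Fin 2, ∑ j : Fin 2, C i j ^ 2))
    (hκ : κ = (κ₂ + 2 * κ₃ +
      Real.sqrt ((κ₂ + 2 * κ₃) ^ 2 +
        4 * τ * Real.sqrt (A 0 ^ 2 + A 1 ^ 2))) / (2 * τ))
    (ξ : ℤ → Fin 2 → ℝ)
    (horbit : ∀ t : ℤ,
      Cᵀ.mulVec (ξ (t + 1)) + C.mulVec (ξ (t - 1)) =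
        A + D.mulVec (ξ t) +
          ![3 * ε₂ * (ξ t 0) ^ 2 + (ξ t 1) ^ 2, 2 * (ξ t 0) * (ξ t 1)])
    (hbdd : ∃ M : ℝ, ∀ t : ℤ, Real.sqrt (ξ t 0 ^ 2 + ξ t 1 ^ 2) ≤ M) :
    ∀ t : ℤ, Real.sqrt (ξ t 0 ^ 2 + ξ t 1 ^ 2) ≤ κ := by
  obtain ⟨M, hM⟩ := hbdd
  -- basic positivity
  have hτpos : 0 < τ := by
    rcases hε with h | h
    · rw [hτ₁ h]; norm_num
    · rw [hτ₂ h]; positivity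
  have hτsq : 2 / 3 ≤ τ ^ 2 := by
    rcases hε with h | h
    · rw [hτ₁ h]; norm_num
    · rw [hτ₂ h, Real.sq_sqrt (by norm_num)]
  have hτle : τ ≤ 1 := by
    rcases hε with h | h
    · rw [hτ₁ h]
    · rw [hτ₂ h]
      rw [show (1:ℝ) = Real.sqrt 1 by simp]
      exact Real.sqrt_le_sqrt (by norm_num)
  have hκ₂0 : 0 ≤ κ₂ := hκ₂ ▸ Real.sqrt_nonneg _
  have hκ₃0 : 0 ≤ κ₃ := hκ₃ ▸ Real.sqrt_nonneg _
  -- sup of norms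
  set S := sSup (Set.range fun t : ℤ => nrm2 (ξ t)) with hS
  have hbdd' : BddAbove (Set.range fun t : ℤ => nrm2 (ξ t)) := ⟨M, by
    rintro x ⟨t, rfl⟩; exact hM t⟩
  have hleS : ∀ t : ℤ, nrm2 (ξ t) ≤ S := fun t =>
    le_csSup hbdd' ⟨t, rfl⟩
  have hS0 : 0 ≤ S := (nrm2_nonneg (ξ 0)).trans (hleS 0)
  set c : ℝ := nrm2 A with hc
  have hc0 : 0 ≤ c := nrm2_nonneg A
  set b : ℝ := κ₂ + 2 * κ₃ with hb
  have hb0 : 0 ≤ b := by positivity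
  -- key pointwise inequality
  have key : ∀ t : ℤ, τ * nrm2 (ξ t) ^ 2 ≤ c + b * S := by
    intro t
    set x := ξ t 0
    set y := ξ t 1
    set q : Fin 2 → ℝ := ![3 * ε₂ * x ^ 2 + y ^ 2, 2 * x * y] with hq
    have hq0 : q 0 = 3 * ε₂ * x ^ 2 + y ^ 2 := rfl
    have hq1 : q 1 = 2 * x * y := rfl
    -- lower bound: τ‖ξ‖² ≤ ‖q‖
    have hlow : τ * (x ^ 2 + y ^ 2) ≤ nrm2 q := by
      apply Real.le_sqrt_of_sq_le
      rw [hq0, hq1]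
      have hsq : τ ^ 2 * (x ^ 2 + y ^ 2) ^ 2
          ≤ (3 * ε₂ * x ^ 2 + y ^ 2) ^ 2 + (2 * x * y) ^ 2 := by
        rcases hε with h | h
        · rw [hτ₁ h, h]; nlinarith [sq_nonneg x, sq_nonneg y, sq_nonneg (x*y), sq_nonneg (x^2)]
        · rw [hτ₂ h, h, Real.sq_sqrt (by norm_num : (0:ℝ) ≤ 2/3)]
          nlinarith [sq_nonneg (5 * x ^ 2 - y ^ 2)]
      calc (τ * (x ^ 2 + y ^ 2)) ^ 2 = τ ^ 2 * (x ^ 2 + y ^ 2) ^ 2 := by ring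
        _ ≤ _ := hsq
    -- upper bound: ‖q‖ ≤ c + κ₂‖ξt‖ + κ₃(‖ξ₊‖+‖ξ₋‖)
    have hEq : q = Cᵀ.mulVec (ξ (t + 1)) + C.mulVec (ξ (t - 1))
        + (-A) + -(D.mulVec (ξ t)) := by
      have := horbit t
      funext i
      have := congrFun this i
      simp only [Pi.add_apply, Pi.neg_apply] at this ⊢
      linarith
    have hCt : Real.sqrt (∑ i : Fin 2, ∑ j : Fin 2, Cᵀ i j ^ 2) = κ₃ := by
      rw [hκ₃]
      congr 1
      simp only [Fin.sum_univ_two, Matrix.transpose_apply]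
      ring
    have h1 : nrm2 (Cᵀ.mulVec (ξ (t + 1))) ≤ κ₃ * S := by
      refine (nrm2_mulVec _ _).trans ?_
      rw [hCt]
      exact mul_le_mul_of_nonneg_left (hleS _) hκ₃0
    have h2 : nrm2 (C.mulVec (ξ (t - 1))) ≤ κ₃ * S := by
      refine (nrm2_mulVec _ _).trans ?_
      rw [← hκ₃]
      exact mul_le_mul_of_nonneg_left (hleS _) hκ₃0
    have h3 : nrm2 (D.mulVec (ξ t)) ≤ κ₂ * S := by
      refine (nrm2_mulVec _ _).trans ?_
      rw [← hκ₂]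
      exact mul_le_mul_of_nonneg_left (hleS _) hκ₂0
    have hup : nrm2 q ≤ c + κ₂ * S + 2 * κ₃ * S := by
      rw [hEq]
      calc nrm2 (Cᵀ.mulVec (ξ (t + 1)) + C.mulVec (ξ (t - 1)) + (-A) + -(D.mulVec (ξ t)))
          ≤ nrm2 (Cᵀ.mulVec (ξ (t + 1)) + C.mulVec (ξ (t - 1)) + (-A)) + nrm2 (-(D.mulVec (ξ t))) :=
            nrm2_add _ _
        _ ≤ nrm2 (Cᵀ.mulVec (ξ (t + 1)) + C.mulVec (ξ (t - 1))) + nrm2 (-A)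
            + nrm2 (-(D.mulVec (ξ t))) := by
            have := nrm2_add (Cᵀ.mulVec (ξ (t + 1)) + C.mulVec (ξ (t - 1))) (-A)
            linarith
        _ ≤ nrm2 (Cᵀ.mulVec (ξ (t + 1))) + nrm2 (C.mulVec (ξ (t - 1))) + nrm2 (-A)
            + nrm2 (-(D.mulVec (ξ t))) := by
            have := nrm2_add (Cᵀ.mulVec (ξ (t + 1))) (C.mulVec (ξ (t - 1)))
            linarith
        _ ≤ c + κ₂ * S + 2 * κ₃ * S := by
            rw [nrm2_neg, nrm2_neg]
            linarith
    have hsq2 : nrm2 (ξ t) ^ 2 = x ^ 2 + y ^ 2 := nrm2_sq (ξ t)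
    rw [hsq2]
    calc τ * (x ^ 2 + y ^ 2) ≤ nrm2 q := hlow
      _ ≤ c + κ₂ * S + 2 * κ₃ * S := hup
      _ = c + b * S := by rw [hb]; ring
  -- derive τ S² ≤ c + b S
  have hR0 : 0 ≤ c + b * S := by positivity
  have hSle : S ≤ Real.sqrt ((c + b * S) / τ) := by
    refine csSup_le ⟨nrm2 (ξ 0), ⟨0, rfl⟩⟩ ?_
    rintro x ⟨t, rfl⟩
    apply Real.le_sqrt_of_sq_le
    rw [le_div_iff₀ hτpos, mul_comm]
    exact key t
  have hSsq : τ * S ^ 2 ≤ c + b * S := by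
    have := (Real.le_sqrt hS0 (by positivity)).mp hSle
    rw [le_div_iff₀ hτpos] at this
    linarith
  -- quadratic root bound
  set r : ℝ := Real.sqrt (b ^ 2 + 4 * τ * c) with hr
  have hr0 : 0 ≤ r := Real.sqrt_nonneg _
  have hr2 : r ^ 2 = b ^ 2 + 4 * τ * c := Real.sq_sqrt (by positivity)
  have hfin : 2 * τ * S ≤ b + r := by
    rcases le_or_gt (2 * τ * S) b with h | h
    · linarith
    · nlinarith [sq_nonneg (2 * τ * S - b - r)]
  have hSκ : S ≤ κ := by
    rw [hκ]
    have hcc : Real.sqrt (A 0 ^ 2 + A 1 ^ 2) = c := rfl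
    rw [hcc, ← hr, le_div_iff₀ (by positivity)]
    linarith
  intro t
  exact le_trans (hleS t) hSκ
end

section
/- If C is a symmetric invertible 2×2 real matrix, then the map M(ξ,η) = (ξ + C⁻ᵀ(−η + Cξ + ∇U(ξ)), Cξ) is reversible: with S(ξ,η) = (C⁻¹η, Cξ) one has S ∘ M = M⁻¹ ∘ S, and S is an involution whose fixed set is the plane {(ξ, Cξ) : ξ ∈ ℝ²}. -/
open Matrix

namespace Matrix

variable {n R : Type*} [Fintype n] [DecidableEq n] [CommRing R] {C : Matrix n n R}

theorem nonsing_inv_mulVec_mulVec (hC : IsUnit C.det) (v : n → R) : C⁻¹ *ᵥ (C *ᵥ v) = v := by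
  rw [mulVec_mulVec, nonsing_inv_mul _ hC, one_mulVec]

theorem mulVec_nonsing_inv_mulVec (hC : IsUnit C.det) (v : n → R) : C *ᵥ (C⁻¹ *ᵥ v) = v := by
  rw [mulVec_mulVec, mul_nonsing_inv _ hC, one_mulVec]

end Matrix

namespace ReversibleStep

variable {n R : Type*} [Fintype n] [DecidableEq n] [CommRing R]
  (C : Matrix n n R) (g : (n → R) → (n → R))

/-- Here `g` stands for `∇U`. -/
noncomputable def step (p : (n → R) × (n → R)) : (n → R) × (n → R) :=
  (p.1 + C⁻¹ *ᵥ (-p.2 + C *ᵥ p.1 + g p.1), C *ᵥ p.1)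

noncomputable def stepInv (p : (n → R) × (n → R)) : (n → R) × (n → R) :=
  (C⁻¹ *ᵥ p.2, p.2 + C *ᵥ (-p.1 + C⁻¹ *ᵥ p.2) + g (C⁻¹ *ᵥ p.2))

noncomputable def reversor (p : (n → R) × (n → R)) : (n → R) × (n → R) :=
  (C⁻¹ *ᵥ p.2, C *ᵥ p.1)

variable {C}

theorem stepInv_step (hC : IsUnit C.det) (p : (n → R) × (n → R)) :
    stepInv C g (step C g p) = p := by
  ext1
  · exact nonsing_inv_mulVec_mulVec hC p.1
  · simp only [step, stepInv, nonsing_inv_mulVec_mulVec hC, mulVec_add, mulVec_neg,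
      mulVec_nonsing_inv_mulVec hC]
    abel

theorem step_stepInv (hC : IsUnit C.det) (p : (n → R) × (n → R)) :
    step C g (stepInv C g p) = p := by
  ext1
  · simp only [step, stepInv, mulVec_add, mulVec_neg, nonsing_inv_mulVec_mulVec hC]
    abel
  · exact mulVec_nonsing_inv_mulVec hC p.2

theorem reversor_step (hC : IsUnit C.det) (p : (n → R) × (n → R)) :
    reversor C (step C g p) = stepInv C g (reversor C p) := by
  ext1
  · rfl
  · simp only [step, stepInv, reversor, nonsing_inv_mulVec_mulVec hC, mulVec_add, mulVec_neg,
      mulVec_nonsing_inv_mulVec hC]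
    abel

theorem reversor_reversor (hC : IsUnit C.det) (p : (n → R) × (n → R)) :
    reversor C (reversor C p) = p :=
  Prod.ext (nonsing_inv_mulVec_mulVec hC p.1) (mulVec_nonsing_inv_mulVec hC p.2)

theorem reversor_eq_self_iff (hC : IsUnit C.det) (p : (n → R) × (n → R)) :
    reversor C p = p ↔ ∃ ξ, p = (ξ, C *ᵥ ξ) := by
  constructor
  · intro h
    exact ⟨p.1, Prod.ext rfl (congrArg Prod.snd h).symm⟩
  · rintro ⟨ξ, rfl⟩
    exact Prod.ext (nonsing_inv_mulVec_mulVec hC ξ) rfl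

end ReversibleStep

open ReversibleStep in
theorem stmt_18_general (C : Matrix (Fin 2) (Fin 2) ℝ) (hC : IsUnit C.det)
    (g : (Fin 2 → ℝ) → (Fin 2 → ℝ)) :
    let M : (Fin 2 → ℝ) × (Fin 2 → ℝ) → (Fin 2 → ℝ) × (Fin 2 → ℝ) := fun p =>
      (p.1 + C⁻¹.mulVec (-p.2 + C.mulVec p.1 + g p.1), C.mulVec p.1)
    let Minv : (Fin 2 → ℝ) × (Fin 2 → ℝ) → (Fin 2 → ℝ) × (Fin 2 → ℝ) := fun p =>
      (C⁻¹.mulVec p.2,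
        p.2 + C.mulVec (-p.1 + C⁻¹.mulVec p.2) + g (C⁻¹.mulVec p.2))
    let S : (Fin 2 → ℝ) × (Fin 2 → ℝ) → (Fin 2 → ℝ) × (Fin 2 → ℝ) := fun p =>
      (C⁻¹.mulVec p.2, C.mulVec p.1)
    (∀ p, Minv (M p) = p) ∧ (∀ p, M (Minv p) = p) ∧
    (∀ p, S (M p) = Minv (S p)) ∧
    (∀ p, S (S p) = p) ∧
    (∀ p, S p = p ↔ ∃ ξ : Fin 2 → ℝ, p = (ξ, C.mulVec ξ)) :=
  ⟨stepInv_step g hC, step_stepInv g hC, reversor_step g hC, reversor_reversor hC,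
    reversor_eq_self_iff hC⟩

/-- For symmetric invertible C, the map
M(ξ,η) = (ξ + C⁻¹(−η + Cξ + ∇U(ξ)), Cξ) is reversible: with S(ξ,η) = (C⁻¹η, Cξ),
S ∘ M = M⁻¹ ∘ S, S is an involution, and Fix(S) = {(ξ, Cξ)}. (Here g = ∇U.) -/
theorem stmt_18 (C : Matrix (Fin 2) (Fin 2) ℝ) (hC : IsUnit C.det) (hsym : Cᵀ = C)
    (g : (Fin 2 → ℝ) → (Fin 2 → ℝ)) :
    let M : (Fin 2 → ℝ) × (Fin 2 → ℝ) → (Fin 2 → ℝ) × (Fin 2 → ℝ) := fun p =>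
      (p.1 + C⁻¹.mulVec (-p.2 + C.mulVec p.1 + g p.1), C.mulVec p.1)
    let Minv : (Fin 2 → ℝ) × (Fin 2 → ℝ) → (Fin 2 → ℝ) × (Fin 2 → ℝ) := fun p =>
      (C⁻¹.mulVec p.2,
        p.2 + C.mulVec (-p.1 + C⁻¹.mulVec p.2) + g (C⁻¹.mulVec p.2))
    let S : (Fin 2 → ℝ) × (Fin 2 → ℝ) → (Fin 2 → ℝ) × (Fin 2 → ℝ) := fun p =>
      (C⁻¹.mulVec p.2, C.mulVec p.1)
    (∀ p, Minv (M p) = p) ∧ (∀ p, M (Minv p) = p) ∧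
    (∀ p, S (M p) = Minv (S p)) ∧
    (∀ p, S (S p) = p) ∧
    (∀ p, S p = p ↔ ∃ ξ : Fin 2 → ℝ, p = (ξ, C.mulVec ξ)) :=
  stmt_18_general C hC g
end

section
/- For the potential U with parameters (a,b,c) = (−1,−0.3,−1) and ε₂ = 1, U has exactly four critical points; with ε₂ = −1 it has exactly two critical points. -/
/-!
Eliminating ξ₂ = -b / (2ξ₁) from ∇U = 0 identifies the critical points with the real roots of
the quartic 3ε₂v⁴ + cv³ + av² + b²/4 (which has no root at 0 since b ≠ 0). For ε₂ = 1 the quartic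
changes sign along -1 < -3/10 < 0 < 1/5 < 1, so it has four roots, and no more by degree. For
ε₂ = -1 it is 9/400 - v²(3v² + v + 1): increasing on (-∞, 0], decreasing on [0, ∞) and positive
at 0, so it has exactly two roots.
-/

open Set Polynomial

theorem exists_mem_Ioo_eq_zero_of_mul_neg {f : ℝ → ℝ} {a b : ℝ} (hab : a ≤ b)
    (hf : ContinuousOn f (Icc a b)) (hsign : f a * f b < 0) : ∃ r ∈ Ioo a b, f r = 0 := by
  rcases mul_neg_iff.mp hsign with ⟨ha, hb⟩ | ⟨ha, hb⟩
  · exact intermediate_value_Ioo' hab hf ⟨hb, ha⟩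
  · exact intermediate_value_Ioo hab hf ⟨ha, hb⟩

theorem Polynomial.setOf_isRoot_eq_rootSet {R : Type*} [CommRing R] [IsDomain R] {p : R[X]}
    (hp : p ≠ 0) : {v | p.IsRoot v} = p.rootSet R := by
  ext v
  simp [mem_rootSet, hp]

theorem Polynomial.ncard_setOf_isRoot_of_sign_changes {p : ℝ[X]} (hp : p ≠ 0) {n : ℕ}
    (hdeg : p.natDegree ≤ n) {x : Fin (n + 1) → ℝ} (hx : StrictMono x)
    (hsign : ∀ i : Fin n, p.eval (x i.castSucc) * p.eval (x i.succ) < 0) :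
    {v | p.IsRoot v}.ncard = n := by
  choose r hr hroot using fun i : Fin n =>
    exists_mem_Ioo_eq_zero_of_mul_neg (hx i.castSucc_lt_succ).le
      p.continuousOn (hsign i)
  have hr_mono : StrictMono r := fun i j hij =>
    calc r i < x i.succ := (hr i).2
      _ ≤ x j.castSucc := hx.monotone (Fin.succ_le_castSucc_iff.mpr hij)
      _ < r j := (hr j).1
  rw [setOf_isRoot_eq_rootSet hp]
  refine le_antisymm ((ncard_rootSet_le p ℝ).trans hdeg) ?_
  calc n = (range r).ncard := by rw [ncard_range_of_injective hr_mono.injective, Nat.card_fin]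
    _ ≤ (p.rootSet ℝ).ncard := by
      refine ncard_le_ncard ?_ (p.rootSet_finite ℝ)
      rintro _ ⟨i, rfl⟩
      rw [← setOf_isRoot_eq_rootSet hp]
      exact hroot i

theorem ncard_setOf_eq_eq_two {f : ℝ → ℝ} {l m r y : ℝ} (hl : l ≤ m) (hr : m ≤ r)
    (hf : ContinuousOn f (Icc l r)) (hmono : StrictMonoOn f (Iic m))
    (hanti : StrictAntiOn f (Ici m)) (hfl : f l ≤ y) (hfm : y < f m) (hfr : f r ≤ y) :
    {x | f x = y}.ncard = 2 := by
  obtain ⟨r₁, ⟨-, hr₁m⟩, hr₁⟩ :=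
    intermediate_value_Icc hl (hf.mono (Icc_subset_Icc_right hr)) ⟨hfl, hfm.le⟩
  obtain ⟨r₂, ⟨hmr₂, -⟩, hr₂⟩ :=
    intermediate_value_Icc' hr (hf.mono (Icc_subset_Icc_left hl)) ⟨hfr, hfm.le⟩
  have hne : r₁ ≠ r₂ := by
    rintro rfl
    rw [← le_antisymm hr₁m hmr₂, hr₁] at hfm
    exact hfm.false
  have : {x | f x = y} = {r₁, r₂} := by
    ext x
    refine ⟨fun hx => ?_, ?_⟩
    · rcases le_total x m with hxm | hmx
      · exact Or.inl (hmono.injOn hxm hr₁m (hx.trans hr₁.symm))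
      · exact Or.inr (hanti.injOn hmx hmr₂ (hx.trans hr₂.symm))
    · rintro (rfl | rfl)
      exacts [hr₁, hr₂]
  rw [this, ncard_pair hne]

noncomputable def criticalQuartic (a b c ε : ℝ) : ℝ[X] :=
  C (3 * ε) * X ^ 4 + C c * X ^ 3 + C a * X ^ 2 + C (b ^ 2 / 4)

section CriticalPoints

variable (a b c ε : ℝ)

@[simp]
theorem eval_criticalQuartic (v : ℝ) :
    (criticalQuartic a b c ε).eval v = 3 * ε * v ^ 4 + c * v ^ 3 + a * v ^ 2 + b ^ 2 / 4 := by
  simp [criticalQuartic]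

theorem setOf_gradient_eq_zero_eq_image (hb : b ≠ 0) :
    {p : ℝ × ℝ | a + c * p.1 + 3 * ε * p.1 ^ 2 + p.2 ^ 2 = 0 ∧ b + 2 * p.1 * p.2 = 0} =
      (fun v => (v, -b / (2 * v))) '' {v | (criticalQuartic a b c ε).IsRoot v} := by
  ext ⟨x, y⟩
  simp only [mem_ofPred_eq, mem_image, Prod.mk.injEq, IsRoot.def, eval_criticalQuartic]
  constructor
  · rintro ⟨h₁, h₂⟩
    have hx : x ≠ 0 := by rintro rfl; exact hb (by simpa using h₂)
    refine ⟨x, by linear_combination x ^ 2 * h₁ - (x * y - b / 2) / 2 * h₂, rfl, ?_⟩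
    field_simp
    linear_combination -h₂
  · rintro ⟨v, hv, rfl, rfl⟩
    have hv0 : v ≠ 0 := by rintro rfl; exact hb (by simpa using hv)
    constructor
    · have key : a + c * v + 3 * ε * v ^ 2 + (-b / (2 * v)) ^ 2 =
          (3 * ε * v ^ 4 + c * v ^ 3 + a * v ^ 2 + b ^ 2 / 4) / v ^ 2 := by
        field_simp
        ring
      rw [key, hv, zero_div]
    · field_simp
      ring

theorem ncard_setOf_gradient_eq_zero (hb : b ≠ 0) :
    {p : ℝ × ℝ | a + c * p.1 + 3 * ε * p.1 ^ 2 + p.2 ^ 2 = 0 ∧ b + 2 * p.1 * p.2 = 0}.ncard =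
      {v | (criticalQuartic a b c ε).IsRoot v}.ncard := by
  rw [setOf_gradient_eq_zero_eq_image a b c ε hb,
    ncard_image_of_injective _ fun _ _ h => congrArg Prod.fst h]

end CriticalPoints

theorem ncard_setOf_isRoot_criticalQuartic_one :
    {v | (criticalQuartic (-1) (-3 / 10) (-1) 1).IsRoot v}.ncard = 4 := by
  refine ncard_setOf_isRoot_of_sign_changes (x := ![-1, -3 / 10, 0, 1 / 5, 1]) ?_ ?_ ?_ ?_
  · intro h
    have h0 := congrArg (eval 0) h
    norm_num at h0
  · unfold criticalQuartic
    compute_degree!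
  · refine Fin.strictMono_iff_lt_succ.mpr fun i => ?_
    fin_cases i <;> norm_num [Matrix.cons_val_two]
  · intro i
    fin_cases i <;> norm_num [Matrix.cons_val_two]

theorem ncard_setOf_isRoot_criticalQuartic_neg_one :
    {v | (criticalQuartic (-1) (-3 / 10) (-1) (-1)).IsRoot v}.ncard = 2 := by
  set p := criticalQuartic (-1) (-3 / 10) (-1) (-1)
  have hderiv (x : ℝ) : deriv (fun v => p.eval v) x = -x * (12 * x ^ 2 + 3 * x + 2) := by
    rw [Polynomial.deriv]
    simp only [p, criticalQuartic, mul_neg, mul_one, map_neg, neg_mul, map_one, one_mul,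
      derivative_mul, derivative_C, zero_mul, derivative_X_pow_succ, Nat.cast_ofNat, map_add,
      zero_add, Nat.cast_one, pow_one, add_zero, eval_add, eval_neg, eval_mul, eval_C, eval_one,
      eval_pow, eval_X]
    ring
  refine ncard_setOf_eq_eq_two (f := fun v => p.eval v) (l := -1) (m := 0) (r := 1)
    (by norm_num) (by norm_num) p.continuousOn ?_ ?_ (by norm_num [p]) (by norm_num [p])
    (by norm_num [p])
  · refine strictMonoOn_of_deriv_pos (convex_Iic 0) p.continuousOn fun x hx => ?_
    rw [interior_Iic, mem_Iio] at hx
    rw [hderiv]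
    nlinarith [sq_nonneg (8 * x + 1)]
  · refine strictAntiOn_of_deriv_neg (convex_Ici 0) p.continuousOn fun x hx => ?_
    rw [interior_Ici, mem_Ioi] at hx
    rw [hderiv]
    nlinarith [sq_nonneg (8 * x + 1)]

/-- For U(ξ) = aξ₁ + bξ₂ + (c/2)ξ₁² + ε₂ξ₁³ + ξ₁ξ₂² with
(a,b,c) = (−1, −3/10, −1): with ε₂ = 1 there are exactly four critical points,
with ε₂ = −1 exactly two. (∇U = (a + cξ₁ + 3ε₂ξ₁² + ξ₂², b + 2ξ₁ξ₂).) -/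
theorem stmt_19 :
    Set.ncard {p : ℝ × ℝ |
      (-1 : ℝ) + (-1) * p.1 + 3 * 1 * p.1 ^ 2 + p.2 ^ 2 = 0 ∧
      (-3 / 10 : ℝ) + 2 * p.1 * p.2 = 0} = 4 ∧
    Set.ncard {p : ℝ × ℝ |
      (-1 : ℝ) + (-1) * p.1 + 3 * (-1) * p.1 ^ 2 + p.2 ^ 2 = 0 ∧
      (-3 / 10 : ℝ) + 2 * p.1 * p.2 = 0} = 2 := by
  have hb : (-3 / 10 : ℝ) ≠ 0 := by norm_num
  rw [ncard_setOf_gradient_eq_zero _ _ _ 1 hb, ncard_setOf_gradient_eq_zero _ _ _ (-1) hb]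
  exact ⟨ncard_setOf_isRoot_criticalQuartic_one, ncard_setOf_isRoot_criticalQuartic_neg_one⟩
end
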